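/- Let Φ be a real n×m matrix with full column rank, let 0 < σ ≤ Σ satisfy σ‖v‖₂ ≤ ‖Φv‖₂ ≤ Σ‖v‖₂ for all v ∈ ℝ^m, let y ∈ ℝ^n, and let x̂ be the unique minimizer of z ↦ ‖y − Φz‖₂. Then for every index i: σ²·x̂_i² ≤ (min over z with z_i = 0 of ‖y − Φz‖₂²) − ‖y − Φx̂‖₂² ≤ Σ²·x̂_i². In words, the increase in squared residual from deleting atom i is comparable, up to the squared extreme singular values, to the squared magnitude of the deleted coefficient. -/

import Mathlib

open Matrix

/-- The Euclidean (ℓ₂) norm of a finitely indexed real vector. -/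
noncomputable def euclNorm {ι : Type*} [Fintype ι] (v : ι → ℝ) : ℝ :=
  ‖(WithLp.equiv 2 (ι → ℝ)).symm v‖

/-!
The least-squares residual `y - Φ x̂` is orthogonal to the range of `Φ`, so for every `z`
Pythagoras gives `‖y - Φ z‖² = ‖y - Φ x̂‖² + ‖Φ (x̂ - z)‖²`. Every `z` with `z i = 0` has
`‖x̂ - z‖² ≥ x̂ i²`, which with the lower singular-value bound bounds the constrained minimum
from below, while `z = x̂` with its `i`-th coordinate zeroed has `‖x̂ - z‖² = x̂ i²` and,
with the upper bound, bounds it from above.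
-/

theorem LinearMap.norm_sub_sq_eq_of_forall_norm_sub_le {V F : Type*} [AddCommGroup V]
    [Module ℝ V] [NormedAddCommGroup F] [InnerProductSpace ℝ F] (f : V →ₗ[ℝ] F) {u : F}
    {x₀ : V} (hmin : ∀ x, ‖u - f x₀‖ ≤ ‖u - f x‖) (x : V) :
    ‖u - f x‖ ^ 2 = ‖u - f x₀‖ ^ 2 + ‖f (x₀ - x)‖ ^ 2 := by
  have hinf : ‖u - f x₀‖ = ⨅ w : (LinearMap.range f : Set F), ‖u - w‖ := by
    refine le_antisymm (le_ciInf ?_)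
      (ciInf_le ⟨0, Set.forall_mem_range.2 fun _ => norm_nonneg _⟩
        (⟨f x₀, x₀, rfl⟩ : (LinearMap.range f : Set F)))
    rintro ⟨_, x', rfl⟩
    exact hmin x'
  have horth := ((LinearMap.range f).norm_eq_iInf_iff_real_inner_eq_zero ⟨x₀, rfl⟩).1
    hinf (f (x₀ - x)) ⟨_, rfl⟩
  rw [show u - f x = (u - f x₀) + f (x₀ - x) by rw [map_sub]; abel, norm_add_sq_real, horth]
  ring

section euclNorm

variable {ι κ : Type*} [Fintype ι] [Fintype κ]

theorem euclNorm_nonneg (v : ι → ℝ) : 0 ≤ euclNorm v :=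
  norm_nonneg _

theorem euclNorm_sq (v : ι → ℝ) : euclNorm v ^ 2 = ∑ j, v j ^ 2 := by
  rw [euclNorm, EuclideanSpace.norm_sq_eq]
  simp

theorem sq_le_euclNorm_sq (v : ι → ℝ) (i : ι) : v i ^ 2 ≤ euclNorm v ^ 2 := by
  rw [euclNorm_sq]
  exact Finset.single_le_sum (f := fun j => v j ^ 2) (fun j _ => sq_nonneg _) (Finset.mem_univ i)

theorem euclNorm_sub_update_zero [DecidableEq ι] (v : ι → ℝ) (i : ι) :
    euclNorm (v - Function.update v i 0) = |v i| := by
  have hsingle : v - Function.update v i 0 = Pi.single i (v i) := by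
    ext j
    rcases eq_or_ne j i with rfl | hj <;> simp [*]
  rw [hsingle, euclNorm, WithLp.equiv_symm_apply, PiLp.toLp_single, PiLp.norm_single,
    Real.norm_eq_abs]

theorem euclNorm_sub_mulVec_sq_eq_of_forall_le (Φ : Matrix κ ι ℝ) {y : κ → ℝ} {xhat : ι → ℝ}
    (hxhat : ∀ z, euclNorm (y - Φ *ᵥ xhat) ≤ euclNorm (y - Φ *ᵥ z)) (z : ι → ℝ) :
    euclNorm (y - Φ *ᵥ z) ^ 2 =
      euclNorm (y - Φ *ᵥ xhat) ^ 2 + euclNorm (Φ *ᵥ (xhat - z)) ^ 2 :=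
  ((WithLp.linearEquiv 2 ℝ (κ → ℝ)).symm.toLinearMap ∘ₗ
    Φ.mulVecLin).norm_sub_sq_eq_of_forall_norm_sub_le (u := WithLp.toLp 2 y) hxhat z

end euclNorm

theorem deletion_increase_vs_coefficient_magnitude_general {n m : ℕ}
    (Φ : Matrix (Fin n) (Fin m) ℝ)
    (σlo σhi : ℝ) (hσlo : 0 < σlo)
    (hlow : ∀ v : Fin m → ℝ, σlo * euclNorm v ≤ euclNorm (Φ.mulVec v))
    (hhigh : ∀ v : Fin m → ℝ, euclNorm (Φ.mulVec v) ≤ σhi * euclNorm v)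
    (y : Fin n → ℝ) (xhat : Fin m → ℝ)
    (hxhat : ∀ z : Fin m → ℝ, euclNorm (y - Φ.mulVec xhat) ≤ euclNorm (y - Φ.mulVec z))
    (i : Fin m) :
    σlo ^ 2 * (xhat i) ^ 2 ≤
        sInf {c : ℝ | ∃ z : Fin m → ℝ, z i = 0 ∧ c = (euclNorm (y - Φ.mulVec z)) ^ 2}
          - (euclNorm (y - Φ.mulVec xhat)) ^ 2 ∧
      sInf {c : ℝ | ∃ z : Fin m → ℝ, z i = 0 ∧ c = (euclNorm (y - Φ.mulVec z)) ^ 2}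
          - (euclNorm (y - Φ.mulVec xhat)) ^ 2 ≤ σhi ^ 2 * (xhat i) ^ 2 := by
  set S := {c : ℝ | ∃ z : Fin m → ℝ, z i = 0 ∧ c = (euclNorm (y - Φ.mulVec z)) ^ 2}
  have hpyth := euclNorm_sub_mulVec_sq_eq_of_forall_le Φ hxhat
  have hlb : ∀ c ∈ S, euclNorm (y - Φ *ᵥ xhat) ^ 2 + σlo ^ 2 * xhat i ^ 2 ≤ c := by
    rintro c ⟨z, hzi, rfl⟩
    have hcoord : xhat i ^ 2 ≤ euclNorm (xhat - z) ^ 2 := by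
      simpa [hzi] using sq_le_euclNorm_sq (xhat - z) i
    have hΦ := pow_le_pow_left₀ (mul_nonneg hσlo.le (euclNorm_nonneg _)) (hlow (xhat - z)) 2
    rw [mul_pow] at hΦ
    rw [hpyth z]
    gcongr
    exact (mul_le_mul_of_nonneg_left hcoord (sq_nonneg σlo)).trans hΦ
  set z₀ := Function.update xhat i 0
  have hmem : euclNorm (y - Φ *ᵥ z₀) ^ 2 ∈ S := ⟨z₀, Function.update_self i 0 xhat, rfl⟩
  have hΦ := pow_le_pow_left₀ (euclNorm_nonneg _) (hhigh (xhat - z₀)) 2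
  rw [mul_pow, euclNorm_sub_update_zero, sq_abs] at hΦ
  constructor
  · linarith [le_csInf ⟨_, hmem⟩ hlb]
  · linarith [csInf_le ⟨_, hlb⟩ hmem, hpyth z₀]

/-- for a full-column-rank `Φ` with singular values between
`σlo` and `σhi`, the increase in squared residual from deleting atom `i` is
comparable, up to the squared extreme singular values, to `xhat i ^ 2`. -/
theorem deletion_increase_vs_coefficient_magnitude {n m : ℕ}
    (Φ : Matrix (Fin n) (Fin m) ℝ)
    (hΦ : Function.Injective Φ.mulVec)
    (σlo σhi : ℝ) (hσlo : 0 < σlo) (hσ : σlo ≤ σhi)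
    (hlow : ∀ v : Fin m → ℝ, σlo * euclNorm v ≤ euclNorm (Φ.mulVec v))
    (hhigh : ∀ v : Fin m → ℝ, euclNorm (Φ.mulVec v) ≤ σhi * euclNorm v)
    (y : Fin n → ℝ) (xhat : Fin m → ℝ)
    (hxhat : ∀ z : Fin m → ℝ, euclNorm (y - Φ.mulVec xhat) ≤ euclNorm (y - Φ.mulVec z))
    (i : Fin m) :
    σlo ^ 2 * (xhat i) ^ 2 ≤
        sInf {c : ℝ | ∃ z : Fin m → ℝ, z i = 0 ∧ c = (euclNorm (y - Φ.mulVec z)) ^ 2}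
          - (euclNorm (y - Φ.mulVec xhat)) ^ 2 ∧
      sInf {c : ℝ | ∃ z : Fin m → ℝ, z i = 0 ∧ c = (euclNorm (y - Φ.mulVec z)) ^ 2}
          - (euclNorm (y - Φ.mulVec xhat)) ^ 2 ≤ σhi ^ 2 * (xhat i) ^ 2 :=
  deletion_increase_vs_coefficient_magnitude_general Φ σlo σhi hσlo hlow hhigh y xhat hxhat i
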